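/- arXiv:1406.2188 — 5 statements merged into one kernel-verified Lean document; each statement's English description precedes it below -/
import Mathlib

section
/- Sorting in exponent vectors: let u = X_1^{α_1}···X_n^{α_n} and v = X_1^{β_1}···X_n^{β_n} be monomials of the same degree. Let J = {i : α_i + β_i is odd}, which has even cardinality 2t, with elements i_1 < i_2 < ... < i_{2t}. Then sort(u,v) = (X_1^{α'_1}···X_n^{α'_n}, X_1^{β'_1}···X_n^{β'_n}) where α'_i = β'_i = (α_i+β_i)/2 for i ∉ J, and α'_{i_r} = (α_{i_r}+β_{i_r}+(-1)^{r+1})/2, β'_{i_r} = (α_{i_r}+β_{i_r}+(-1)^r)/2 for 1 ≤ r ≤ 2t. -/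
/-- Monomials as multisets of variable indices (smaller index = larger variable). -/
def stdList (m : Multiset ℕ) : List ℕ := m.sort (· ≤ ·)

def evens (l : List ℕ) : List ℕ := ((l.zipIdx.map Prod.swap).filter fun p => p.1 % 2 == 0).map Prod.snd

def odds (l : List ℕ) : List ℕ := ((l.zipIdx.map Prod.swap).filter fun p => p.1 % 2 == 1).map Prod.snd

/-- `sort(u,v) = (Y_1Y_3⋯Y_{2p-1}, Y_2Y_4⋯Y_{2p})` where `uv = Y_1⋯Y_{2p}` is the
standard (weakly decreasing) factorization. -/
def sortPair (u v : Multiset ℕ) : Multiset ℕ × Multiset ℕ :=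
  (((evens (stdList (u + v)) : List ℕ) : Multiset ℕ),
   ((odds (stdList (u + v)) : List ℕ) : Multiset ℕ))

/-- The monomial `X_1^{α_1}⋯X_n^{α_n}` as a multiset of variable indices. -/
def toMul {n : ℕ} (α : Fin n → ℕ) : Multiset ℕ :=
  Finset.univ.val.bind fun i : Fin n => Multiset.replicate (α i) (i : ℕ)

/-! In the standard factorization of `uv = X^(α + β)` the copies of `X_k` form one block of
length `γ_k = α_k + β_k`, preceded by the `∑_{j<k} γ_j` entries of smaller index. The first
factor of `sort` takes the entries in even positions (counting from 0), hence `⌈γ_k/2⌉` copies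
of `X_k` if the block starts at an even position and `⌊γ_k/2⌋` otherwise, and the parity of the
starting position is that of the number of odd `γ_j` with `j < k`. The second factor is the
complementary multiset. -/

theorem evens_cons (a : ℕ) (l : List ℕ) : evens (a :: l) = a :: odds l := by
  simp only [evens, odds, List.zipIdx_cons, zero_add, List.zipIdx_succ, List.map_cons,
    Prod.swap_prod_mk, List.map_map, Function.comp_def, Nat.zero_mod, BEq.rfl,
    List.filter_cons_of_pos, List.filter_map, Prod.fst_swap, Prod.snd_swap, List.cons.injEq,
    true_and]
  exact congrArg _ (List.filter_congr fun x _ => by simp only [beq_eq_beq]; omega)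

theorem odds_cons (a : ℕ) (l : List ℕ) : odds (a :: l) = evens l := by
  simp only [evens, odds, List.zipIdx_cons, zero_add, List.zipIdx_succ, List.map_cons,
    Prod.swap_prod_mk, List.map_map, Function.comp_def, Nat.zero_mod, Nat.reduceBEq,
    Bool.false_eq_true, not_false_eq_true, List.filter_cons_of_neg, List.filter_map,
    Prod.fst_swap, Prod.snd_swap]
  exact congrArg _ (List.filter_congr fun x _ => by simp only [beq_eq_beq]; omega)

theorem evens_append : ∀ l₁ l₂ : List ℕ,
    evens (l₁ ++ l₂) = evens l₁ ++ if Even l₁.length then evens l₂ else odds l₂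
  | [], _ => rfl
  | [a], l₂ => by simp [evens_cons, odds]
  | a :: b :: l₁, l₂ => by
    simp only [List.cons_append, evens_cons, odds_cons, evens_append l₁ l₂, List.length_cons,
      Nat.even_add_one, not_not]

theorem odds_append : ∀ l₁ l₂ : List ℕ,
    odds (l₁ ++ l₂) = odds l₁ ++ if Even l₁.length then odds l₂ else evens l₂
  | [], _ => rfl
  | a :: l₁, l₂ => by
    simp only [List.cons_append, odds_cons, evens_append, List.length_cons, Nat.even_add_one]
    split_ifs <;> rfl

theorem evens_replicate (a : ℕ) : ∀ c, evens (List.replicate c a) = List.replicate ((c + 1) / 2) a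
  | 0 => rfl
  | 1 => rfl
  | c + 2 => by
    rw [List.replicate_succ, List.replicate_succ, evens_cons, odds_cons, evens_replicate a c,
      show (c + 2 + 1) / 2 = (c + 1) / 2 + 1 by omega, List.replicate_succ]

theorem odds_replicate (a : ℕ) : ∀ c, odds (List.replicate c a) = List.replicate (c / 2) a
  | 0 => rfl
  | c + 1 => by rw [List.replicate_succ, odds_cons, evens_replicate]

theorem coe_evens_add_coe_odds : ∀ l : List ℕ, (evens l : Multiset ℕ) + odds l = l
  | [] => rfl
  | a :: l => by
    rw [evens_cons, odds_cons, ← Multiset.cons_coe, Multiset.cons_add, add_comm,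
      coe_evens_add_coe_odds l, Multiset.cons_coe]

theorem evens_subset (l : List ℕ) : evens l ⊆ l := fun x hx => by
  rw [← Multiset.mem_coe, ← coe_evens_add_coe_odds l]
  exact Multiset.mem_add.2 (Or.inl hx)

theorem odds_subset (l : List ℕ) : odds l ⊆ l := fun x hx => by
  rw [← Multiset.mem_coe, ← coe_evens_add_coe_odds l]
  exact Multiset.mem_add.2 (Or.inr hx)

theorem count_evens_append_replicate_append {x : ℕ} {l₁ l₂ : List ℕ} (c : ℕ) (h₁ : x ∉ l₁)
    (h₂ : x ∉ l₂) : (evens (l₁ ++ List.replicate c x ++ l₂)).count x =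
      if Even l₁.length then (c + 1) / 2 else c / 2 := by
  have hnot : ∀ l, x ∉ l → (evens l).count x = 0 ∧ (odds l).count x = 0 := fun l hl =>
    ⟨List.count_eq_zero_of_not_mem fun h => hl (evens_subset l h),
      List.count_eq_zero_of_not_mem fun h => hl (odds_subset l h)⟩
  rw [List.append_assoc, evens_append, odds_append, evens_append, List.length_replicate,
    evens_replicate, odds_replicate]
  split_ifs <;> simp [(hnot l₁ h₁).1, (hnot l₂ h₂).1, (hnot l₂ h₂).2]

theorem stdList_eq_append (M : Multiset ℕ) (x : ℕ) :
    stdList M = stdList (M.filter (· < x)) ++ List.replicate (M.count x) x ++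
      stdList (M.filter (x < ·)) := by
  refine List.Perm.eq_of_pairwise' (Multiset.pairwise_sort _ _) ?_ (Multiset.coe_eq_coe.1 ?_)
  · simp only [List.pairwise_append, stdList, Multiset.pairwise_sort, List.pairwise_replicate,
      Multiset.mem_sort, Multiset.mem_filter, List.mem_append, List.mem_replicate]
    grind
  · ext a
    simp only [stdList, ← Multiset.coe_add, Multiset.sort_eq, Multiset.coe_replicate,
      Multiset.count_add, Multiset.count_filter, Multiset.count_replicate]
    split_ifs <;> subst_vars <;> omega

theorem count_evens_stdList (M : Multiset ℕ) (x : ℕ) :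
    (evens (stdList M)).count x =
      if Even (M.filter (· < x)).card then (M.count x + 1) / 2 else M.count x / 2 := by
  rw [stdList_eq_append M x, count_evens_append_replicate_append, stdList,
    Multiset.length_sort] <;> simp [stdList, Multiset.mem_sort]

theorem sortPair_fst_add_snd (u v : Multiset ℕ) : (sortPair u v).1 + (sortPair u v).2 = u + v := by
  rw [sortPair, coe_evens_add_coe_odds, stdList, Multiset.sort_eq]

theorem Finset.card_filter_and_le_of_pos {ι : Type*} [Fintype ι] [LinearOrder ι]
    {p : ι → Prop} [DecidablePred p] {i : ι} (hi : p i) :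
    (Finset.univ.filter fun j => p j ∧ j ≤ i).card =
      (Finset.univ.filter fun j => p j ∧ j < i).card + 1 := by
  rw [← Finset.card_insert_of_notMem (s := Finset.univ.filter fun j => p j ∧ j < i) (a := i)
    (by simp)]
  congr 1
  ext j
  simp only [Finset.mem_insert, Finset.mem_filter, Finset.mem_univ, true_and, le_iff_lt_or_eq]
  grind

section Monomial

variable {n : ℕ}

theorem toMul_add_toMul (γ δ : Fin n → ℕ) : toMul γ + toMul δ = toMul (γ + δ) := by
  simp only [toMul, Pi.add_apply, Multiset.replicate_add, Multiset.bind_add]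

theorem count_toMul (γ : Fin n → ℕ) (x : ℕ) :
    (toMul γ).count x = ∑ i : Fin n, if (i : ℕ) = x then γ i else 0 := by
  simp only [toMul, Multiset.count_bind, Multiset.count_replicate]
  rfl

theorem count_toMul_val (γ : Fin n → ℕ) (i : Fin n) : (toMul γ).count (i : ℕ) = γ i := by
  simp [count_toMul, Fin.val_inj]

theorem count_toMul_of_le (γ : Fin n → ℕ) {x : ℕ} (hx : n ≤ x) : (toMul γ).count x = 0 := by
  rw [count_toMul]
  exact Finset.sum_eq_zero fun i _ => if_neg (by omega)

theorem card_filter_lt_toMul (γ : Fin n → ℕ) (i : Fin n) :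
    ((toMul γ).filter (· < (i : ℕ))).card = ∑ j with j < i, γ j := by
  simp only [toMul, Multiset.filter_bind, Multiset.card_bind]
  rw [Finset.sum_filter]
  refine Finset.sum_congr rfl fun j _ => ?_
  simp [← Multiset.coe_replicate, List.filter_replicate, apply_ite List.length]

def numOddBefore (γ : Fin n → ℕ) (i : Fin n) : ℕ :=
  (Finset.univ.filter fun j => Odd (γ j) ∧ j < i).card

theorem even_card_filter_lt_toMul_iff (γ : Fin n → ℕ) (i : Fin n) :
    Even ((toMul γ).filter (· < (i : ℕ))).card ↔ Even (numOddBefore γ i) := by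
  rw [card_filter_lt_toMul, Finset.even_sum_iff_even_card_odd, Finset.filter_filter, numOddBefore]
  simp only [and_comm]

def sortFstExponent (γ : Fin n → ℕ) (i : Fin n) : ℕ :=
  if Even (numOddBefore γ i) then (γ i + 1) / 2 else γ i / 2

def sortSndExponent (γ : Fin n → ℕ) (i : Fin n) : ℕ :=
  if Even (numOddBefore γ i) then γ i / 2 else (γ i + 1) / 2

theorem sortPair_toMul_fst (α β : Fin n → ℕ) :
    (sortPair (toMul α) (toMul β)).1 = toMul (sortFstExponent (α + β)) := by
  ext x
  rw [sortPair, Multiset.coe_count, count_evens_stdList, toMul_add_toMul]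
  rcases lt_or_ge x n with hx | hx
  · obtain ⟨i, rfl⟩ : ∃ i : Fin n, (i : ℕ) = x := ⟨⟨x, hx⟩, rfl⟩
    rw [count_toMul_val, count_toMul_val, sortFstExponent]
    exact if_congr (even_card_filter_lt_toMul_iff _ i) rfl rfl
  · simp [count_toMul_of_le _ hx]

theorem odd_card_filter_le_iff (γ : Fin n → ℕ) {i : Fin n} (hi : Odd (γ i)) :
    Odd (Finset.univ.filter fun j => Odd (γ j) ∧ j ≤ i).card ↔ Even (numOddBefore γ i) := by
  rw [Finset.card_filter_and_le_of_pos (p := fun j => Odd (γ j)) hi, Nat.odd_add_one,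
    Nat.not_odd_iff_even, numOddBefore]

theorem sortFstExponent_eq (γ : Fin n → ℕ) (i : Fin n) :
    sortFstExponent γ i = if Even (γ i) then γ i / 2
      else if Odd (Finset.univ.filter fun j => Odd (γ j) ∧ j ≤ i).card
        then (γ i + 1) / 2 else (γ i - 1) / 2 := by
  rcases Nat.even_or_odd (γ i) with hγ | hγ
  · rw [sortFstExponent, if_pos hγ]
    obtain ⟨r, hr⟩ := hγ
    split_ifs <;> omega
  · rw [sortFstExponent, if_neg (Nat.not_even_iff_odd.2 hγ)]
    simp only [odd_card_filter_le_iff γ hγ]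
    obtain ⟨r, hr⟩ := hγ
    split_ifs <;> omega

theorem sortSndExponent_eq (γ : Fin n → ℕ) (i : Fin n) :
    sortSndExponent γ i = if Even (γ i) then γ i / 2
      else if Odd (Finset.univ.filter fun j => Odd (γ j) ∧ j ≤ i).card
        then (γ i - 1) / 2 else (γ i + 1) / 2 := by
  rcases Nat.even_or_odd (γ i) with hγ | hγ
  · rw [sortSndExponent, if_pos hγ]
    obtain ⟨r, hr⟩ := hγ
    split_ifs <;> omega
  · rw [sortSndExponent, if_neg (Nat.not_even_iff_odd.2 hγ)]
    simp only [odd_card_filter_le_iff γ hγ]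
    obtain ⟨r, hr⟩ := hγ
    split_ifs <;> omega

theorem sortPair_toMul (α β : Fin n → ℕ) :
    sortPair (toMul α) (toMul β) =
      (toMul (sortFstExponent (α + β)), toMul (sortSndExponent (α + β))) := by
  have hsum := sortPair_fst_add_snd (toMul α) (toMul β)
  rw [sortPair_toMul_fst, toMul_add_toMul] at hsum
  refine Prod.ext (sortPair_toMul_fst α β) (add_left_cancel (hsum.trans ?_))
  rw [toMul_add_toMul]
  congr 1
  funext i
  simp only [sortFstExponent, sortSndExponent, Pi.add_apply]
  split_ifs <;> omega

end Monomial

theorem sortPair_exponents_general {n : ℕ} (α β : Fin n → ℕ) :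
    sortPair (toMul α) (toMul β) =
      (toMul (fun i => if Even (α i + β i) then (α i + β i) / 2
          else if Odd ((Finset.univ.filter fun j => Odd (α j + β j) ∧ j ≤ i).card)
            then (α i + β i + 1) / 2 else (α i + β i - 1) / 2),
       toMul (fun i => if Even (α i + β i) then (α i + β i) / 2
          else if Odd ((Finset.univ.filter fun j => Odd (α j + β j) ∧ j ≤ i).card)
            then (α i + β i - 1) / 2 else (α i + β i + 1) / 2)) := by
  rw [sortPair_toMul]
  congr 2 <;> funext i
  exacts [sortFstExponent_eq (α + β) i, sortSndExponent_eq (α + β) i]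

/-- sorting in exponent vectors.  Let `J = {i : α_i + β_i odd}` and,
for `i ∈ J`, let `r` be the (1-based) position of `i` in `J`, i.e.
`r = #{j ∈ J : j ≤ i}`.  Then `sort(X^α, X^β) = (X^{α'}, X^{β'})` with
`α'_i = β'_i = (α_i+β_i)/2` for `i ∉ J`, and
`α'_i = (α_i+β_i+(-1)^{r+1})/2`, `β'_i = (α_i+β_i+(-1)^r)/2` for `i ∈ J`. -/
theorem sortPair_exponents {n : ℕ} (α β : Fin n → ℕ) (h : ∑ i, α i = ∑ i, β i) :
    sortPair (toMul α) (toMul β) =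
      (toMul (fun i => if Even (α i + β i) then (α i + β i) / 2
          else if Odd ((Finset.univ.filter fun j => Odd (α j + β j) ∧ j ≤ i).card)
            then (α i + β i + 1) / 2 else (α i + β i - 1) / 2),
       toMul (fun i => if Even (α i + β i) then (α i + β i) / 2
          else if Odd ((Finset.univ.filter fun j => Odd (α j + β j) ∧ j ≤ i).card)
            then (α i + β i - 1) / 2 else (α i + β i + 1) / 2)) :=
  sortPair_exponents_general α β
end

section
/- (De Negri's characterization of principal strongly stable sets) Let w_1 = X_1^{α_1}···X_n^{α_n} and w_2 = X_1^{β_1}···X_n^{β_n} be monomials of the same degree. Then w_2 ∈ B(w_1) if and only if Σ_{i=k}^n β_i ≤ Σ_{i=k}^n α_i for all 2 ≤ k ≤ n. -/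
/-- Membership in the principal strongly stable set `B(w)` (exponent-vector form):
`B(w)` is the smallest set of monomials containing `w` and closed under replacing
a variable `X_j` dividing the monomial by a variable `X_i` with `i < j`. -/
inductive memBv {n : ℕ} (w : Fin n → ℕ) : (Fin n → ℕ) → Prop
  | base : memBv w w
  | step (v : Fin n → ℕ) (i j : Fin n) (hij : i < j) (hj : 0 < v j) (hv : memBv w v) :
      memBv w (Function.update (Function.update v j (v j - 1)) i (v i + 1))

/-!
Under the Borel move `X_j ↦ X_i` (`i < j`) every tail sum `∑_{m ≥ k}` of the exponent
vector drops by one or stays the same, which gives the forward direction. Conversely, if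
`α ≠ β` satisfy the tail inequalities, let `j` be the last index where they differ and `i < j`
the last index whose tail sums agree; then all tail inequalities between `i` and `j` are
strict, so moving one unit of `α` from `j` to `i` preserves them, and the weighted degree
`∑ m * α m` decreases.
-/

theorem memBv.trans {n : ℕ} {u v w : Fin n → ℕ} (huv : memBv u v) (hvw : memBv v w) :
    memBv u w := by
  induction hvw with
  | base => exact huv
  | step v i j hij hj _ ih => exact step v i j hij hj ih

open Finset Function

namespace StronglyStable

variable {n : ℕ}

def borelMove (v : Fin n → ℕ) (i j : Fin n) : Fin n → ℕ :=
  update (update v j (v j - 1)) i (v i + 1)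

-- Indexed by `k : ℕ` so that `tailSum v 0` is the degree and `tailSum v k = 0` for `n ≤ k`.
def tailSum (v : Fin n → ℕ) (k : ℕ) : ℕ :=
  ∑ m ∈ univ.filter (fun m : Fin n => k ≤ ↑m), v m

def weight (v : Fin n → ℕ) : ℕ :=
  ∑ m : Fin n, (m : ℕ) * v m

theorem borelMove_add_single {v : Fin n → ℕ} {i j : Fin n} (hij : i ≠ j) (hj : 0 < v j) :
    borelMove v i j + Pi.single j 1 = v + Pi.single i 1 := by
  funext m
  simp only [borelMove, Pi.add_apply, Pi.single_apply, update_apply]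
  split_ifs <;> subst_vars <;> omega

theorem sum_mul_borelMove_add (f : Fin n → ℕ) {v : Fin n → ℕ} {i j : Fin n} (hij : i ≠ j)
    (hj : 0 < v j) : ∑ m, f m * borelMove v i j m + f j = ∑ m, f m * v m + f i := by
  have key := congrFun (borelMove_add_single hij hj)
  have hsingle (a : Fin n) : ∑ m, f m * (Pi.single a 1 : Fin n → ℕ) m = f a := by
    simp [Pi.single_apply]
  rw [← hsingle j, ← hsingle i, ← sum_add_distrib, ← sum_add_distrib]
  refine sum_congr rfl fun m _ => ?_
  rw [← mul_add, ← mul_add]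
  exact congrArg (f m * ·) (key m)

theorem tailSum_eq_sum_mul (v : Fin n → ℕ) (k : ℕ) :
    tailSum v k = ∑ m : Fin n, (if k ≤ (m : ℕ) then 1 else 0) * v m := by
  simp only [tailSum, sum_filter, boole_mul]

theorem tailSum_zero (v : Fin n → ℕ) : tailSum v 0 = ∑ m, v m := by
  simp [tailSum]

theorem tailSum_of_le {v : Fin n → ℕ} {k : ℕ} (hk : n ≤ k) : tailSum v k = 0 :=
  sum_eq_zero fun m hm => absurd (mem_filter.1 hm).2 (by omega)

theorem tailSum_eq_add_tailSum_succ (v : Fin n → ℕ) (j : Fin n) :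
    tailSum v j = v j + tailSum v (j + 1) := by
  have : univ.filter (fun m : Fin n => (j : ℕ) ≤ m)
      = insert j (univ.filter (fun m : Fin n => (j : ℕ) + 1 ≤ m)) := by
    ext m
    simp only [mem_filter, mem_univ, true_and, mem_insert, Fin.ext_iff]
    omega
  rw [tailSum, this, sum_insert (by simp), tailSum]

theorem tailSum_borelMove_add {v : Fin n → ℕ} {i j : Fin n} (hij : i ≠ j) (hj : 0 < v j)
    (k : ℕ) : tailSum (borelMove v i j) k + (if k ≤ (j : ℕ) then 1 else 0)
      = tailSum v k + (if k ≤ (i : ℕ) then 1 else 0) := by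
  rw [tailSum_eq_sum_mul, tailSum_eq_sum_mul]
  exact sum_mul_borelMove_add (fun m => if k ≤ (m : ℕ) then 1 else 0) hij hj

theorem tailSum_borelMove_le {v : Fin n → ℕ} {i j : Fin n} (hij : i < j) (hj : 0 < v j)
    (k : ℕ) : tailSum (borelMove v i j) k ≤ tailSum v k := by
  have := tailSum_borelMove_add hij.ne hj k
  have : (i : ℕ) < j := hij
  split_ifs at * <;> omega

theorem weight_borelMove_lt {v : Fin n → ℕ} {i j : Fin n} (hij : i < j) (hj : 0 < v j) :
    weight (borelMove v i j) < weight v := by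
  have := sum_mul_borelMove_add (fun m => (m : ℕ)) hij.ne hj
  have : (i : ℕ) < j := hij
  simp only [weight]
  omega

theorem tailSum_le_of_memBv {α β : Fin n → ℕ} (h : memBv α β) (k : ℕ) :
    tailSum β k ≤ tailSum α k := by
  induction h with
  | base => rfl
  | step v i j hij hj _ ih => exact (tailSum_borelMove_le hij hj k).trans ih

theorem exists_borelMove_of_tailSum_le {α β : Fin n → ℕ} (hne : α ≠ β)
    (htot : tailSum β 0 = tailSum α 0) (hle : ∀ k, tailSum β k ≤ tailSum α k) :
    ∃ i j : Fin n, i < j ∧ 0 < α j ∧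
      ∀ k : ℕ, (i : ℕ) < k → k ≤ j → tailSum β k < tailSum α k := by
  obtain ⟨j, hj, hjmax⟩ := exists_max_image (univ.filter fun m => α m ≠ β m) id
    (by simpa [Finset.Nonempty, funext_iff] using hne)
  simp only [mem_filter, mem_univ, true_and, id] at hj hjmax
  have htail : tailSum β (j + 1) = tailSum α (j + 1) :=
    sum_congr rfl fun m hm => by_contra fun hm' => by
      have := hjmax m (Ne.symm hm')
      have := (mem_filter.1 hm).2
      omega
  have hβj : β j < α j := by
    have := hle j
    rw [tailSum_eq_add_tailSum_succ, tailSum_eq_add_tailSum_succ, htail] at this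
    omega
  let P k := tailSum β k = tailSum α k
  have hP : P (Nat.findGreatest P j) := Nat.findGreatest_spec (Nat.zero_le _) htot
  have hij : Nat.findGreatest P j < j := by
    refine lt_of_le_of_ne (Nat.findGreatest_le _) fun hij => ?_
    have hPj : tailSum β j = tailSum α j := hij ▸ hP
    rw [tailSum_eq_add_tailSum_succ, tailSum_eq_add_tailSum_succ, htail] at hPj
    omega
  refine ⟨⟨_, hij.trans j.isLt⟩, j, hij, by omega, fun k hik hkj => ?_⟩
  exact lt_of_le_of_ne (hle k) (Nat.findGreatest_is_greatest (P := P) hik hkj)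

theorem memBv_of_tailSum_le {α β : Fin n → ℕ} (htot : tailSum β 0 = tailSum α 0)
    (hle : ∀ k, tailSum β k ≤ tailSum α k) : memBv α β := by
  induction hw : weight α using Nat.strong_induction_on generalizing α with
  | _ N ih =>
  by_cases hαβ : α = β
  · exact hαβ ▸ .base
  obtain ⟨i, j, hij, hj, hstrict⟩ := exists_borelMove_of_tailSum_le hαβ htot hle
  have hle' (k : ℕ) : tailSum β k ≤ tailSum (borelMove α i j) k := by
    have := tailSum_borelMove_add hij.ne hj k
    by_cases hk : (i : ℕ) < k ∧ k ≤ j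
    · have := hstrict k hk.1 hk.2
      split_ifs at * <;> omega
    · have := hle k
      split_ifs at * <;> omega
  have htot' : tailSum β 0 = tailSum (borelMove α i j) 0 := by
    have := tailSum_borelMove_add hij.ne hj 0
    simp only [Nat.zero_le, if_true] at this
    omega
  exact (memBv.step α i j hij hj .base).trans
    (ih _ (hw ▸ weight_borelMove_lt hij hj) htot' hle' rfl)

end StronglyStable

open StronglyStable

-- Indices are 0-based: the paper's range `2 ≤ k ≤ n` is `1 ≤ k` here.
/-- De Negri: for monomials `w_1 = X^α`, `w_2 = X^β` of the same degree,
`w_2 ∈ B(w_1)` iff `Σ_{i=k}^n β_i ≤ Σ_{i=k}^n α_i` for all `2 ≤ k ≤ n`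
(here indices are 0-based: `k` ranges over positions with `1 ≤ k`). -/
theorem memBv_iff_tail_sums {n : ℕ} (α β : Fin n → ℕ) (h : ∑ i, α i = ∑ i, β i) :
    memBv α β ↔ ∀ k : Fin n, 1 ≤ (k : ℕ) →
      (∑ i ∈ Finset.univ.filter (fun i => k ≤ i), β i) ≤
        (∑ i ∈ Finset.univ.filter (fun i => k ≤ i), α i) := by
  refine ⟨fun hB k _ => tailSum_le_of_memBv hB k, fun hc => ?_⟩
  have htot : tailSum β 0 = tailSum α 0 := by rw [tailSum_zero, tailSum_zero, h]
  refine memBv_of_tailSum_le htot fun k => ?_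
  rcases Nat.eq_zero_or_pos k with rfl | hk
  · exact htot.le
  · by_cases hkn : k < n
    · exact hc ⟨k, hkn⟩ hk
    · rw [tailSum_of_le (not_lt.1 hkn), tailSum_of_le (not_lt.1 hkn)]
end

section
/- Swapping an out-of-order pair strictly decreases the inversion number: let A be a c×d matrix with entries in a totally ordered set, and suppose A_{j_1 k_1} < A_{j_2 k_2} with (k_1,j_1) <_lex (k_2,j_2). Let A' be obtained from A by swapping these two entries. Then e_{A'} < e_A. -/
/-- Column-major lexicographic order on matrix positions `(row, col)`:
`(j,k) <_pos (j',k')` iff `(k,j) <_lex (k',j')`. -/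
def posLt {c d : ℕ} (p q : Fin c × Fin d) : Prop :=
  p.2 < q.2 ∨ (p.2 = q.2 ∧ p.1 < q.1)

instance {c d : ℕ} : DecidableRel (@posLt c d) := fun _ _ => by
  unfold posLt; infer_instance

/-- The number of inversions `e_A` of a matrix `A` over a totally ordered set:
the number of pairs of positions `((j,k),(j',k'))` with `(k,j) <_lex (k',j')`
and `A_{j'k'} > A_{jk}`. -/
def invNum {c d : ℕ} {α : Type*} [LinearOrder α] (A : Fin c → Fin d → α) : ℕ :=
  (Finset.univ.filter fun p : (Fin c × Fin d) × (Fin c × Fin d) =>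
    posLt p.1 p.2 ∧ A p.1.1 p.1.2 < A p.2.1 p.2.2).card

/-!
Let `σ` be the transposition of the two positions `P < Q` (in column-major order). An inversion
`(x, y)` of `A ∘ σ` is sent to `(σ x, σ y)` when `σ` preserves the order of `x` and `y`, and to
itself otherwise. The order is reversed only when `x = P` or `y = Q` and the other point lies
between `P` and `Q`; then `A P < A Q` makes `(x, y)` an inversion of `A` already. This injects the
inversions of `A ∘ σ` into those of `A` and misses `(P, Q)`.
-/

open Finset

section Inversions

variable {ι α : Type*} [LinearOrder ι] [LinearOrder α]

def inversions [Fintype ι] (f : ι → α) : Finset (ι × ι) :=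
  {p | p.1 < p.2 ∧ f p.1 < f p.2}

@[simp]
lemma mem_inversions [Fintype ι] {f : ι → α} {p : ι × ι} :
    p ∈ inversions f ↔ p.1 < p.2 ∧ f p.1 < f p.2 := by
  simp [inversions]

lemma eq_left_or_eq_right_of_swap_reverses {P Q x y : ι} (hPQ : P < Q) (hxy : x < y)
    (hrev : Equiv.swap P Q y < Equiv.swap P Q x) :
    (x = P ∧ y ≤ Q) ∨ (P ≤ x ∧ y = Q) := by
  simp only [Equiv.swap_apply_def] at hrev
  split_ifs at hrev <;> grind

lemma lt_of_comp_swap_lt_of_swap_reverses {f : ι → α} {P Q x y : ι} (hPQ : P < Q)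
    (hf : f P < f Q) (hxy : x < y) (hrev : Equiv.swap P Q y < Equiv.swap P Q x)
    (hinv : f (Equiv.swap P Q x) < f (Equiv.swap P Q y)) :
    f x < f y ∧ (x, y) ≠ (P, Q) := by
  rcases eq_left_or_eq_right_of_swap_reverses hPQ hxy hrev with ⟨rfl, hy⟩ | ⟨hx, rfl⟩
  · rcases hy.lt_or_eq with hyQ | rfl
    · rw [Equiv.swap_apply_left, Equiv.swap_apply_of_ne_of_ne hxy.ne' hyQ.ne] at hinv
      exact ⟨hf.trans hinv, by simp [hyQ.ne]⟩
    · simp only [Equiv.swap_apply_left, Equiv.swap_apply_right] at hinv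
      exact absurd hf hinv.not_gt
  · rcases hx.lt_or_eq with hPx | rfl
    · rw [Equiv.swap_apply_right, Equiv.swap_apply_of_ne_of_ne hPx.ne' hxy.ne] at hinv
      exact ⟨hinv.trans hf, by simp [hPx.ne']⟩
    · simp only [Equiv.swap_apply_left, Equiv.swap_apply_right] at hinv
      exact absurd hf hinv.not_gt

theorem card_inversions_comp_swap_lt [Fintype ι] {f : ι → α} {P Q : ι} (hPQ : P < Q)
    (hf : f P < f Q) : #(inversions (f ∘ Equiv.swap P Q)) < #(inversions f) := by
  set σ := Equiv.swap P Q
  let φ : ι × ι → ι × ι := fun p => if σ p.1 < σ p.2 then (σ p.1, σ p.2) else p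
  calc #(inversions (f ∘ σ)) ≤ #((inversions f).erase (P, Q)) := by
        refine card_le_card_of_injOn φ ?_ ?_
        · rintro ⟨x, y⟩ hp
          obtain ⟨hxy, hinv⟩ := mem_inversions.1 hp
          by_cases hσ : σ x < σ y
          · have hne : (σ x, σ y) ≠ (P, Q) := by
              intro h
              simp only [Prod.mk.injEq, σ, Equiv.swap_apply_eq_iff, Equiv.swap_apply_left,
                Equiv.swap_apply_right] at h
              exact hPQ.not_gt (h.1 ▸ h.2 ▸ hxy)
            simpa [φ, hσ, hne] using hinv
          · have hrev : σ y < σ x := (not_lt.1 hσ).lt_of_ne (σ.injective.ne hxy.ne')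
            simpa [φ, hσ, hxy] using lt_of_comp_swap_lt_of_swap_reverses hPQ hf hxy hrev hinv
        · rintro ⟨x, y⟩ hp ⟨x', y'⟩ hp' h
          have hxy := (mem_inversions.1 hp).1
          have hxy' := (mem_inversions.1 hp').1
          simp only [φ] at h
          split_ifs at h with h₁ h₂ h₂ <;> simp only [Prod.mk.injEq] at h ⊢
          · exact ⟨σ.injective h.1, σ.injective h.2⟩
          · exact (h₂ (by simpa [← h.1, ← h.2, σ] using hxy)).elim
          · exact (h₁ (by simpa [h.1, h.2, σ] using hxy')).elim
          · exact h
    _ < #(inversions f) := card_erase_lt_of_mem (by simpa using ⟨hPQ, hf⟩)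

end Inversions

section Matrix

variable {c d : ℕ} {α : Type*}

def colMajorEquiv (c d : ℕ) : Fin c × Fin d ≃ Fin d ×ₗ Fin c :=
  (Equiv.prodComm _ _).trans toLex

def colMajor (A : Fin c → Fin d → α) (i : Fin d ×ₗ Fin c) : α :=
  A (ofLex i).2 (ofLex i).1

lemma posLt_iff_colMajorEquiv_lt {p q : Fin c × Fin d} :
    posLt p q ↔ colMajorEquiv c d p < colMajorEquiv c d q :=
  (Prod.Lex.toLex_lt_toLex (x := (p.2, p.1)) (y := (q.2, q.1))).symm

lemma invNum_eq_card_inversions_colMajor [LinearOrder α] (A : Fin c → Fin d → α) :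
    invNum A = #(inversions (colMajor A)) := by
  refine card_equiv ((colMajorEquiv c d).prodCongr (colMajorEquiv c d)) fun p => ?_
  simp [posLt_iff_colMajorEquiv_lt, colMajor, colMajorEquiv]

lemma colMajor_swap_entries (A : Fin c → Fin d → α) (j₁ j₂ : Fin c) (k₁ k₂ : Fin d) :
    colMajor (fun j k => if (j, k) = (j₁, k₁) then A j₂ k₂
      else if (j, k) = (j₂, k₂) then A j₁ k₁ else A j k) =
      colMajor A ∘ Equiv.swap (toLex (k₁, j₁)) (toLex (k₂, j₂)) := by
  funext i
  obtain ⟨⟨k, j⟩, rfl⟩ := toLex.surjective i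
  simp only [colMajor, Function.comp_apply, Equiv.swap_apply_def, toLex_inj, Prod.mk.injEq]
  split_ifs <;> simp_all

end Matrix

/-- swapping an out-of-order pair strictly decreases the inversion
number: if `A_{j₁k₁} < A_{j₂k₂}` with `(k₁,j₁) <_lex (k₂,j₂)` and `A'` is obtained
from `A` by swapping these two entries, then `e_{A'} < e_A`. -/
theorem invNum_swap_lt {c d : ℕ} {α : Type*} [LinearOrder α] (A : Fin c → Fin d → α)
    (j₁ j₂ : Fin c) (k₁ k₂ : Fin d) (hpos : posLt (j₁, k₁) (j₂, k₂))
    (hlt : A j₁ k₁ < A j₂ k₂) :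
    invNum (fun j k =>
      if (j, k) = (j₁, k₁) then A j₂ k₂
      else if (j, k) = (j₂, k₂) then A j₁ k₁
      else A j k) < invNum A := by
  rw [invNum_eq_card_inversions_colMajor, invNum_eq_card_inversions_colMajor,
    colMajor_swap_entries]
  exact card_inversions_comp_swap_lt (posLt_iff_colMajorEquiv_lt.1 hpos) hlt
end

section
/- Let u,v be monomials of degrees p ≤ q with max(u) > min(v), and set p* = max{k : 1 ≤ k ≤ p and X_k^{(u)} > X_{q-k+1}^{(v)}}. Define û = (∏_{k=p*+1}^{p} X_k^{(u)})·(∏_{k=1}^{p*} X_{q-k+1}^{(v)}) and v̂ = (∏_{k=1}^{q-p*} X_k^{(v)})·(∏_{k=1}^{p*} X_k^{(u)}). Then max(û) ≤ min(v̂) and û v̂ = uv; hence (û, v̂) = ord(u,v). -/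
/-- `ord(u,v) = (Y_{q+1}⋯Y_{q+p}, Y_1⋯Y_q)` for `deg u = p ≤ q = deg v`. -/
def ordPair (u v : Multiset ℕ) : Multiset ℕ × Multiset ℕ :=
  ((((stdList (u + v)).drop (Multiset.card v) : List ℕ) : Multiset ℕ),
   (((stdList (u + v)).take (Multiset.card v) : List ℕ) : Multiset ℕ))

namespace List

variable {α : Type*} [Preorder α] {l l₁ l₂ : List α} {a b d : α} {i j n : ℕ}

theorem Pairwise.getD_le_getD (h : l.Pairwise (· ≤ ·)) (hij : i ≤ j) (hj : j < l.length) :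
    l.getD i d ≤ l.getD j d := by
  rw [getD_eq_getElem l d (hij.trans_lt hj), getD_eq_getElem l d hj]
  exact h.rel_get_of_le (a := ⟨i, by omega⟩) (b := ⟨j, hj⟩) hij

theorem Pairwise.le_getD_of_mem_take (h : l.Pairwise (· ≤ ·)) (hn : n ≤ l.length)
    (hb : b ∈ l.take n) : 0 < n ∧ b ≤ l.getD (n - 1) d := by
  obtain ⟨k, hk, rfl⟩ := getElem_of_mem hb
  rw [length_take] at hk
  rw [getElem_take, ← getD_eq_getElem l d]
  exact ⟨by omega, h.getD_le_getD (by omega) (by omega)⟩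

theorem Pairwise.getD_le_of_mem_drop (h : l.Pairwise (· ≤ ·)) (ha : a ∈ l.drop n) :
    n < l.length ∧ l.getD n d ≤ a := by
  obtain ⟨k, hk, rfl⟩ := getElem_of_mem ha
  rw [length_drop] at hk
  rw [getElem_drop, ← getD_eq_getElem l d]
  exact ⟨by omega, h.getD_le_getD (by omega) (by omega)⟩

theorem le_of_mem_take_of_mem_drop (h₁ : l₁.Pairwise (· ≤ ·)) (h₂ : l₂.Pairwise (· ≤ ·))
    (hi : i ≤ l₁.length) (hij : 0 < i → j < l₂.length → l₁.getD (i - 1) d ≤ l₂.getD j d)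
    (hb : b ∈ l₁.take i) (ha : a ∈ l₂.drop j) : b ≤ a := by
  obtain ⟨hi₀, hb⟩ := h₁.le_getD_of_mem_take (d := d) hi hb
  obtain ⟨hj, ha⟩ := h₂.getD_le_of_mem_drop (d := d) ha
  exact hb.trans ((hij hi₀ hj).trans ha)

theorem le_of_mem_drop_add_drop_of_mem_take_add_take (h₁ : l₁.Pairwise (· ≤ ·))
    (h₂ : l₂.Pairwise (· ≤ ·)) (hi : i ≤ l₁.length) (hj : j ≤ l₂.length)
    (hij : 0 < i → j < l₂.length → l₁.getD (i - 1) d ≤ l₂.getD j d)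
    (hji : 0 < j → i < l₁.length → l₂.getD (j - 1) d ≤ l₁.getD i d)
    (ha : a ∈ (l₁.drop i : Multiset α) + l₂.drop j) (hb : b ∈ (l₂.take j : Multiset α) + l₁.take i) :
    b ≤ a := by
  simp only [Multiset.mem_add, Multiset.mem_coe] at ha hb
  rcases ha with ha | ha <;> rcases hb with hb | hb
  · exact le_of_mem_take_of_mem_drop h₂ h₁ hj hji hb ha
  · exact h₁.rel_of_mem_take_of_mem_drop hb ha
  · exact h₂.rel_of_mem_take_of_mem_drop hb ha
  · exact le_of_mem_take_of_mem_drop h₁ h₂ hi hij hb ha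

end List

theorem ordPair_eq_of_forall_le {u v a b : Multiset ℕ} (hsum : a + b = u + v)
    (hcard : Multiset.card b = Multiset.card v) (hle : ∀ x ∈ a, ∀ y ∈ b, y ≤ x) :
    ordPair u v = (a, b) := by
  have hsort : stdList (u + v) = stdList b ++ stdList a := by
    refine List.Perm.eq_of_pairwise' (Multiset.pairwise_sort _ _) ?_ ?_
    · exact List.pairwise_append.mpr ⟨Multiset.pairwise_sort _ _, Multiset.pairwise_sort _ _,
        fun y hy x hx => hle x ((Multiset.mem_sort _).mp hx) y ((Multiset.mem_sort _).mp hy)⟩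
    · rw [← Multiset.coe_eq_coe, ← Multiset.coe_add, stdList, stdList, stdList,
        Multiset.sort_eq, Multiset.sort_eq, Multiset.sort_eq, ← hsum, add_comm]
  have hlen : (stdList b).length = Multiset.card v := by
    rw [stdList, Multiset.length_sort, hcard]
  rw [ordPair, hsort, List.drop_left' hlen, List.take_left' hlen, stdList, stdList,
    Multiset.sort_eq, Multiset.sort_eq]

namespace Finset

variable (P : ℕ → Prop) [DecidablePred P] (p : ℕ)

theorem sup_id_filter_Icc_le : ((Icc 1 p).filter P).sup id ≤ p :=
  Finset.sup_le fun _ hk => (mem_Icc.mp (mem_filter.mp hk).1).2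

theorem sup_id_filter_Icc_spec (h : 0 < ((Icc 1 p).filter P).sup id) :
    P (((Icc 1 p).filter P).sup id) := by
  obtain hs | hs := ((Icc 1 p).filter P).eq_empty_or_nonempty
  · simp [hs] at h
  · have hmem : ((Icc 1 p).filter P).sup id ∈ (Icc 1 p).filter P := by
      simpa only [Set.image_id, mem_coe] using sup_mem_of_nonempty (f := id) hs
    exact (mem_filter.mp hmem).2

theorem not_sup_id_filter_Icc_succ (h : ((Icc 1 p).filter P).sup id < p) :
    ¬P (((Icc 1 p).filter P).sup id + 1) := fun hP =>
  Nat.not_succ_le_self _ (le_sup (f := id) (mem_filter.mpr ⟨mem_Icc.mpr ⟨by omega, h⟩, hP⟩))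

end Finset

theorem ordPair_explicit_general (u v : Multiset ℕ)
    (hpq : Multiset.card u ≤ Multiset.card v) :
    let p := Multiset.card u
    let q := Multiset.card v
    let lu := stdList u
    let lv := stdList v
    let ps := ((Finset.Icc 1 p).filter fun k => lu.getD (k - 1) 0 < lv.getD (q - k) 0).sup id
    let uhat : Multiset ℕ := ((lu.drop ps : List ℕ) : Multiset ℕ) + ((lv.drop (q - ps) : List ℕ) : Multiset ℕ)
    let vhat : Multiset ℕ := ((lv.take (q - ps) : List ℕ) : Multiset ℕ) + ((lu.take ps : List ℕ) : Multiset ℕ)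
    (∀ a ∈ uhat, ∀ b ∈ vhat, b ≤ a) ∧ uhat + vhat = u + v ∧ (uhat, vhat) = ordPair u v := by
  intro p q lu lv ps uhat vhat
  have hlu : lu.Pairwise (· ≤ ·) := Multiset.pairwise_sort _ _
  have hlv : lv.Pairwise (· ≤ ·) := Multiset.pairwise_sort _ _
  have hp : lu.length = p := Multiset.length_sort _
  have hq : lv.length = q := Multiset.length_sort _
  have hps : ps ≤ p := Finset.sup_id_filter_Icc_le _ p
  have hps_in : 0 < ps → lu.getD (ps - 1) 0 < lv.getD (q - ps) 0 :=
    Finset.sup_id_filter_Icc_spec _ p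
  have hsucc_out (h : ps < p) : lv.getD (q - ps - 1) 0 ≤ lu.getD ps 0 := by
    have h' := Finset.not_sup_id_filter_Icc_succ (fun k => lu.getD (k - 1) 0 < lv.getD (q - k) 0) p h
    rw [Nat.add_sub_cancel, ← Nat.sub_sub] at h'
    exact not_lt.mp h'
  have hsep : ∀ a ∈ uhat, ∀ b ∈ vhat, b ≤ a := fun a ha b hb =>
    List.le_of_mem_drop_add_drop_of_mem_take_add_take hlu hlv (by omega) (by omega)
      (fun h _ => (hps_in h).le) (fun _ h => hsucc_out (hp ▸ h)) ha hb
  have hsum : uhat + vhat = u + v := by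
    calc uhat + vhat
        = (↑(lu.take ps) + ↑(lu.drop ps)) + (↑(lv.take (q - ps)) + ↑(lv.drop (q - ps))) := by
          simp only [uhat, vhat]; abel
      _ = u + v := by
          simp only [Multiset.coe_add, List.take_append_drop, lu, lv, stdList, Multiset.sort_eq]
  have hcard : Multiset.card vhat = q := by
    simp only [vhat, Multiset.card_add, Multiset.coe_card, List.length_take, hp, hq]
    omega
  exact ⟨hsep, hsum, (ordPair_eq_of_forall_le hsum hcard hsep).symm⟩

/-- let `deg u = p ≤ q = deg v` with `max(u) > min(v)` (the largest
variable of `u` exceeds the smallest variable of `v`, i.e. the first index of `u`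
is smaller than the last index of `v`), and let
`p* = max{k : 1 ≤ k ≤ p, X_k^{(u)} > X_{q-k+1}^{(v)}}`.  Then with
`û = (∏_{k=p*+1}^p X_k^{(u)})·(∏_{k=1}^{p*} X_{q-k+1}^{(v)})` and
`v̂ = (∏_{k=1}^{q-p*} X_k^{(v)})·(∏_{k=1}^{p*} X_k^{(u)})`, one has
`max(û) ≤ min(v̂)`, `û v̂ = uv`, and `(û, v̂) = ord(u,v)`. -/
theorem ordPair_explicit (u v : Multiset ℕ)
    (hu : 1 ≤ Multiset.card u) (hpq : Multiset.card u ≤ Multiset.card v)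
    (hmm : (stdList u).getD 0 0 < (stdList v).getD (Multiset.card v - 1) 0) :
    let p := Multiset.card u
    let q := Multiset.card v
    let lu := stdList u
    let lv := stdList v
    let ps := ((Finset.Icc 1 p).filter fun k => lu.getD (k - 1) 0 < lv.getD (q - k) 0).sup id
    let uhat : Multiset ℕ := ((lu.drop ps : List ℕ) : Multiset ℕ) + ((lv.drop (q - ps) : List ℕ) : Multiset ℕ)
    let vhat : Multiset ℕ := ((lv.take (q - ps) : List ℕ) : Multiset ℕ) + ((lu.take ps : List ℕ) : Multiset ℕ)
    (∀ a ∈ uhat, ∀ b ∈ vhat, b ≤ a) ∧ uhat + vhat = u + v ∧ (uhat, vhat) = ordPair u v :=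
  ordPair_explicit_general u v hpq
end

section
/- Necessity of the min-max condition: if M = ⨆_{i=0}^s M_i is closed under comparability (notation as before), then max(u_{i n_i}) ≤ min(u_{(i+1) n_{i+1}}) for all 1 ≤ i ≤ s-1, where u_{i n_i} is the revlex-smallest element of M_i and max, min denote the largest and smallest variable dividing a monomial (under X_1 > ... > X_n). -/
/-- Graded reverse-lex `u >_rev v` for equal-degree monomials. -/
def revGtM (u v : Multiset ℕ) : Prop :=
  ∃ k, (stdList u).getD k 0 < (stdList v).getD k 0 ∧
    ∀ k', k < k' → (stdList u).getD k' 0 = (stdList v).getD k' 0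


/-! Let `u`, `v` be the revlex-smallest generators of `M_i` and `M_{i+1}`. In the sorted merge of
`u` and `v`, the last `deg u` entries dominate the entries of `u` one by one, so the first
component of `ord(u, v)`, which lies in `M_i`, is not revlex-larger than `u`; by minimality of `u`
it is `u`, hence the second component is `v`. Since `ord` splits the sorted merge into a front
and a back part, every variable of `v` is at least every variable of `u`. -/

section SortedList

variable {α : Type*} [LinearOrder α] {L A B : List α}

lemma List.Pairwise.countP_lt_getElem_le (h : L.Pairwise (· ≤ ·)) {j : ℕ}
    (hj : j < L.length) :
    L.countP (· < L[j]) ≤ j := by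
  have hdrop : (L.drop j).countP (· < L[j]) = 0 := by
    rw [List.countP_eq_zero]
    intro a ha
    obtain ⟨k, hk, rfl⟩ := List.mem_iff_getElem.mp ha
    have hjk : j + k < L.length := by simp at hk; omega
    simpa using h.rel_get_of_le (a := ⟨j, hj⟩) (b := ⟨j + k, hjk⟩) (by simp [Fin.le_def])
  calc L.countP (· < L[j])
      = (L.take j).countP (· < L[j]) + (L.drop j).countP (· < L[j]) := by
        rw [← List.countP_append, List.take_append_drop]
    _ ≤ j := by
        rw [hdrop, add_zero]
        exact List.countP_le_length.trans (List.length_take_le _ _)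

lemma List.Pairwise.lt_countP_of_getElem_lt (h : L.Pairwise (· ≤ ·)) {p : ℕ}
    (hp : p < L.length) {x : α} (hlt : L[p] < x) : p < L.countP (· < x) := by
  have htake : (L.take (p + 1)).countP (· < x) = p + 1 := by
    rw [List.countP_eq_length.mpr, List.length_take]
    · omega
    · intro a ha
      obtain ⟨k, hk, rfl⟩ := List.mem_iff_getElem.mp ha
      have hkp : k ≤ p := by simp at hk; omega
      simpa using (h.rel_get_of_le (a := ⟨k, by omega⟩) (b := ⟨p, hp⟩) hkp).trans_lt hlt
  have := (List.take_sublist (p + 1) L).countP_le (p := (· < x))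
  omega

lemma List.Pairwise.getElem_le_getElem_add_of_perm (hA : A.Pairwise (· ≤ ·))
    (hL : L.Pairwise (· ≤ ·)) (hperm : L.Perm (A ++ B)) {k : ℕ} (hk : k < A.length) :
    A[k] ≤ L[B.length + k]'(by rw [hperm.length_eq, List.length_append]; omega) := by
  by_contra! hlt
  have hcount := hperm.countP_eq (· < A[k])
  rw [List.countP_append] at hcount
  have hL_lt := hL.lt_countP_of_getElem_lt _ hlt
  have hA_le := hA.countP_lt_getElem_le hk
  have hB_le : B.countP (· < A[k]) ≤ B.length := List.countP_le_length
  omega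

lemma List.Pairwise.le_of_mem_take_of_mem_drop (h : L.Pairwise (· ≤ ·)) (c : ℕ) {x y : α}
    (hx : x ∈ L.take c) (hy : y ∈ L.drop c) : x ≤ y := by
  rw [← List.take_append_drop c L, List.pairwise_append] at h
  exact h.2.2 x hx y hy

end SortedList

section Monomials

lemma coe_stdList (m : Multiset ℕ) : ((stdList m : List ℕ) : Multiset ℕ) = m :=
  Multiset.sort_eq _ _

lemma pairwise_stdList (m : Multiset ℕ) : (stdList m).Pairwise (· ≤ ·) :=
  Multiset.pairwise_sort _ _

lemma length_stdList (m : Multiset ℕ) : (stdList m).length = Multiset.card m :=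
  Multiset.length_sort _

lemma stdList_coe_of_pairwise {l : List ℕ} (h : l.Pairwise (· ≤ ·)) :
    stdList (l : Multiset ℕ) = l :=
  (Multiset.coe_eq_coe.mp (coe_stdList l)).eq_of_pairwise' (pairwise_stdList _) h

variable (u v : Multiset ℕ)

lemma ordPair_snd_add_fst : (ordPair u v).2 + (ordPair u v).1 = u + v := by
  rw [ordPair, Multiset.coe_add, List.take_append_drop, coe_stdList]

lemma stdList_ordPair_fst : stdList (ordPair u v).1 = (stdList (u + v)).drop (Multiset.card v) :=
  stdList_coe_of_pairwise ((pairwise_stdList _).sublist (List.drop_sublist _ _))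

lemma getD_stdList_le_getD_ordPair_fst (k : ℕ) :
    (stdList u).getD k 0 ≤ (stdList (ordPair u v).1).getD k 0 := by
  have hperm : (stdList (u + v)).Perm (stdList u ++ stdList v) := by
    rw [← Multiset.coe_eq_coe, ← Multiset.coe_add, coe_stdList, coe_stdList, coe_stdList]
  rcases lt_or_ge k (Multiset.card u) with hk | hk
  · rw [stdList_ordPair_fst, List.getD_eq_getElem _ _ (by rw [length_stdList]; exact hk),
      List.getD_eq_getElem _ _ (by simp [length_stdList]; omega), List.getElem_drop]
    simpa [length_stdList] using (pairwise_stdList u).getElem_le_getElem_add_of_perm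
      (pairwise_stdList _) hperm (by rwa [length_stdList])
  · rw [List.getD_eq_default _ _ (by rw [length_stdList]; exact hk)]
    exact Nat.zero_le _

lemma not_revGtM_ordPair_fst : ¬ revGtM (ordPair u v).1 u := by
  rintro ⟨k, hlt, -⟩
  exact (getD_stdList_le_getD_ordPair_fst u v k).not_gt hlt

lemma ordPair_snd_eq_of_fst_eq (h : (ordPair u v).1 = u) : (ordPair u v).2 = v := by
  have := ordPair_snd_add_fst u v
  rw [h, add_comm u v] at this
  exact add_right_cancel this

lemma le_of_mem_ordPair_snd_of_mem_ordPair_fst {a b : ℕ} (hb : b ∈ (ordPair u v).2)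
    (ha : a ∈ (ordPair u v).1) : b ≤ a :=
  (pairwise_stdList _).le_of_mem_take_of_mem_drop _ hb ha

end Monomials

theorem necessity_min_max_general {s : ℕ} {ni : Fin (s + 1) → ℕ}
    (U : (i : Fin (s + 1)) → Fin (ni i) → Multiset ℕ)
    (hni : ∀ i, 0 < ni i)
    (hrev : ∀ i (j j' : Fin (ni i)), j < j' → revGtM (U i j) (U i j'))
    (hOrd : ∀ (i i' : Fin (s + 1)) (j : Fin (ni i)) (j' : Fin (ni i')), i < i' →
      ∃ l l', ordPair (U i j) (U i' j') = (U i l, U i' l')) :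
    ∀ (i : Fin (s + 1)) (_ : 0 < (i : ℕ)) (hi : (i : ℕ) < s),
      ∀ a ∈ U i ⟨ni i - 1, Nat.sub_lt (hni i) Nat.one_pos⟩,
      ∀ b ∈ U ⟨(i : ℕ) + 1, Nat.succ_lt_succ hi⟩
          ⟨ni ⟨(i : ℕ) + 1, Nat.succ_lt_succ hi⟩ - 1,
            Nat.sub_lt (hni ⟨(i : ℕ) + 1, Nat.succ_lt_succ hi⟩) Nat.one_pos⟩,
        b ≤ a := by
  intro i _ hi a ha b hb
  set j : Fin (ni i) := ⟨ni i - 1, Nat.sub_lt (hni i) Nat.one_pos⟩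
  set i' : Fin (s + 1) := ⟨i + 1, Nat.succ_lt_succ hi⟩
  set j' : Fin (ni i') := ⟨ni i' - 1, Nat.sub_lt (hni i') Nat.one_pos⟩
  obtain ⟨l, l', hord⟩ := hOrd i i' j j' (Fin.lt_def.mpr (Nat.lt_succ_self i))
  have hl : l = j := by
    refine le_antisymm (Fin.le_def.mpr (Nat.le_sub_one_of_lt l.isLt)) (not_lt.mp fun hlt => ?_)
    exact not_revGtM_ordPair_fst (U i j) (U i' j') (by simpa [hord] using hrev i l j hlt)
  have hfst : (ordPair (U i j) (U i' j')).1 = U i j := by rw [hord, hl]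
  refine le_of_mem_ordPair_snd_of_mem_ordPair_fst (U i j) (U i' j') ?_ (hfst.symm ▸ ha)
  rwa [ordPair_snd_eq_of_fst_eq _ _ hfst]

/-- necessity of the min-max condition: if
`M = ⨆_{i=0}^s M_i` (setup as before: `M_0 = {X_1,…,X_n}`, `M_i` the revlex-indexed
minimal generators of degree `d_i`) is closed under comparability, then
`max(u_{i n_i}) ≤ min(u_{(i+1) n_{i+1}})` for `1 ≤ i ≤ s-1`; in index terms, every
index occurring in `u_{(i+1) n_{i+1}}` is ≤ every index occurring in `u_{i n_i}`. -/
theorem necessity_min_max {s n : ℕ} {ni : Fin (s + 1) → ℕ}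
    (U : (i : Fin (s + 1)) → Fin (ni i) → Multiset ℕ) (d : Fin (s + 1) → ℕ)
    (hni : ∀ i, 0 < ni i)
    (hd0 : d 0 = 1) (hdmono : Monotone d)
    (hcard : ∀ i j, Multiset.card (U i j) = d i)
    (hn0 : ni 0 = n) (hvar0 : ∀ j : Fin (ni 0), U 0 j = {(j : ℕ)})
    (hvars : ∀ i j, ∀ a ∈ U i j, a < n)
    (hrev : ∀ i (j j' : Fin (ni i)), j < j' → revGtM (U i j) (U i j'))
    (hOrd : ∀ (i i' : Fin (s + 1)) (j : Fin (ni i)) (j' : Fin (ni i')), i < i' →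
      ∃ l l', ordPair (U i j) (U i' j') = (U i l, U i' l'))
    (hSort : ∀ (i : Fin (s + 1)) (j j' : Fin (ni i)),
      ∃ l l', sortPair (U i j) (U i j') = (U i l, U i l')) :
    ∀ (i : Fin (s + 1)) (_ : 0 < (i : ℕ)) (hi : (i : ℕ) < s),
      ∀ a ∈ U i ⟨ni i - 1, Nat.sub_lt (hni i) Nat.one_pos⟩,
      ∀ b ∈ U ⟨(i : ℕ) + 1, Nat.succ_lt_succ hi⟩
          ⟨ni ⟨(i : ℕ) + 1, Nat.succ_lt_succ hi⟩ - 1,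
            Nat.sub_lt (hni ⟨(i : ℕ) + 1, Nat.succ_lt_succ hi⟩) Nat.one_pos⟩,
        b ≤ a :=
  necessity_min_max_general U hni hrev hOrd
end
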